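/- Let G_∞=(V_∞,E_∞) be an infinite connected graph of bounded degree and q∈(0,1). Consider the FA-1f model on G_∞ with constraints c_x(ω)=1 iff ω_y=0 for some neighbor y of x (no unconstrained vertex), with spectral gap gap(G_∞,FA-1f) := inf of D(f)/Var_μ(f) over nonconstant functions f:{0,1}^{V_∞}→ℝ depending on finitely many coordinates, where μ is the product measure giving each coordinate value 0 with probability q and D(f)=Σ_{x∈V_∞} μ(c_x·Var_x f). Then gap(G_∞,FA-1f) ≥ gap(ℤ,East). -/

import Mathlib

open scoped Classical BigOperators

noncomputable section

/-- Indicator of a proposition. -/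
def ind (P : Prop) : ℝ := if P then 1 else 0

variable {ι : Type*} [DecidableEq ι]

/-- Extend a configuration defined on the finite set `S` by `true` (occupied) elsewhere. -/
def extCfg (S : Finset ι) (σ : {x // x ∈ S} → Bool) : ι → Bool :=
  fun x => if h : x ∈ S then σ ⟨x, h⟩ else true

/-- Product Bernoulli weight of a local configuration: each site is empty (`false`)
with probability `q` and occupied (`true`) with probability `1 - q`. -/
def cylWeight (q : ℝ) (S : Finset ι) (σ : {x // x ∈ S} → Bool) : ℝ :=
  ∏ x : {x // x ∈ S}, (if σ x then 1 - q else q)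

/-- Expectation (under the Bernoulli(1-q) product measure) of a function depending
only on the coordinates in `S`. -/
def cylExp (q : ℝ) (S : Finset ι) (f : (ι → Bool) → ℝ) : ℝ :=
  ∑ σ : {x // x ∈ S} → Bool, cylWeight q S σ * f (extCfg S σ)

/-- `f` depends only on the coordinates in `S`. -/
def DependsOnCoords (f : (ι → Bool) → ℝ) (S : Finset ι) : Prop :=
  ∀ ω ω' : ι → Bool, (∀ x ∈ S, ω x = ω' x) → f ω = f ω'

/-- The local variance `Var_x f (ω) = p q (f(ω^{x←1}) - f(ω^{x←0}))²`, `p = 1 - q`. -/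
def varAt (q : ℝ) (f : (ι → Bool) → ℝ) (x : ι) (ω : ι → Bool) : ℝ :=
  (1 - q) * q * (f (Function.update ω x true) - f (Function.update ω x false)) ^ 2

/-- Variance of a function depending only on the coordinates in `S`. -/
def cylVar (q : ℝ) (S : Finset ι) (f : (ι → Bool) → ℝ) : ℝ :=
  cylExp q S (fun ω => (f ω) ^ 2) - (cylExp q S f) ^ 2

/-- Dirichlet form `D(f) = Σ_x μ(c_x · Var_x f)` of a function depending only on the
coordinates in `S`, for constraints `c` such that `c x` depends only on the coordinates
in `supp x`. -/
def dirichlet (q : ℝ) (c : ι → (ι → Bool) → Prop) (supp : ι → Finset ι)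
    (S : Finset ι) (f : (ι → Bool) → ℝ) : ℝ :=
  ∑' x : ι, cylExp q (insert x (S ∪ supp x)) (fun ω => ind (c x ω) * varAt q f x ω)

/-- The spectral gap of the kinetically constrained model with constraints `c`
(the constraint at `x` depending only on the coordinates in `supp x`):
the infimum of `D(f)/Var(f)` over nonconstant functions depending on finitely many
coordinates. -/
def kcmGap (q : ℝ) (c : ι → (ι → Bool) → Prop) (supp : ι → Finset ι) : ℝ :=
  sInf { γ : ℝ | ∃ (f : (ι → Bool) → ℝ) (S : Finset ι),
    DependsOnCoords f S ∧ (∃ ω ω', f ω ≠ f ω') ∧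
    γ = dirichlet q c supp S f / cylVar q S f }

/-- The spectral gap of the East model on `ℤ` at parameter `q`. -/
def eastGap (q : ℝ) : ℝ :=
  kcmGap q (fun (x : ℤ) ω => ω (x + 1) = false) (fun x => {x + 1})

end

/-
Fix `f` depending on a finite set `S` of vertices and a vertex `w ∉ S`. Sending every `x ∈ S` to
a neighbour `par x` one step closer to `w` makes `S` a forest directed towards `w`; the FA-1f
constraint at `x` is implied by "`par x` is empty", so the FA-1f Dirichlet form dominates the one of
the East model on this forest. The East Poincaré inequality on a forest goes by induction on `S`:
at a leaf `ℓ`, which no constraint sees, `f = avgAt q ℓ f + φ_ℓ · diffAt ℓ f` with `φ_ℓ` centred,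
and both the variance and the Dirichlet form split along this decomposition; two distinct leaves
therefore reduce the inequality to smaller forests. A forest with a single leaf is a path, which
`-dist(·, w)` maps injectively onto consecutive integers, and there the inequality is the
definition of `gap(ℤ, East)`.
-/

open Function Finset

noncomputable section

theorem ind_nonneg (P : Prop) : 0 ≤ ind P := by
  unfold ind
  split <;> norm_num

theorem ind_mono {P Q : Prop} (h : P → Q) : ind P ≤ ind Q := by
  unfold ind
  split_ifs with hP hQ <;> first | exact absurd (h hP) hQ | norm_num

section Cylinder

variable {ι : Type*}

theorem cylWeight_nonneg {q : ℝ} (hq₀ : 0 ≤ q) (hq₁ : q ≤ 1) (S : Finset ι)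
    (τ : {x // x ∈ S} → Bool) : 0 ≤ cylWeight q S τ :=
  prod_nonneg fun _ _ => by split <;> linarith

theorem cylWeight_pos {q : ℝ} (hq : q ∈ Set.Ioo (0 : ℝ) 1) (S : Finset ι)
    (τ : {x // x ∈ S} → Bool) : 0 < cylWeight q S τ :=
  prod_pos fun _ _ => by split <;> linarith [hq.1, hq.2]

variable [DecidableEq ι]

theorem varAt_nonneg {q : ℝ} (hq₀ : 0 ≤ q) (hq₁ : q ≤ 1) (f : (ι → Bool) → ℝ) (x : ι)
    (ω : ι → Bool) : 0 ≤ varAt q f x ω :=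
  mul_nonneg (mul_nonneg (by linarith) hq₀) (sq_nonneg _)

def insertCfgEquiv {a : ι} {S : Finset ι} (ha : a ∉ S) :
    ({x // x ∈ insert a S} → Bool) ≃ Bool × ({x // x ∈ S} → Bool) :=
  ((subtypeInsertEquivOption ha).arrowCongr (Equiv.refl Bool)).trans
    (Equiv.piOptionEquivProd (β := fun _ => Bool))

theorem insertCfgEquiv_symm_apply_self {a : ι} {S : Finset ι} (ha : a ∉ S) (b : Bool)
    (τ : {x // x ∈ S} → Bool) : (insertCfgEquiv ha).symm (b, τ) ⟨a, mem_insert_self a S⟩ = b := by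
  simp [insertCfgEquiv, subtypeInsertEquivOption]

theorem insertCfgEquiv_symm_apply_of_mem {a : ι} {S : Finset ι} (ha : a ∉ S) (b : Bool)
    (τ : {x // x ∈ S} → Bool) (x : {x // x ∈ S}) :
    (insertCfgEquiv ha).symm (b, τ) ⟨x, mem_insert_of_mem x.2⟩ = τ x := by
  have hxa : (x : ι) ≠ a := fun h => ha (h ▸ x.2)
  simp [insertCfgEquiv, subtypeInsertEquivOption, hxa]

theorem extCfg_insertCfgEquiv_symm {a : ι} {S : Finset ι} (ha : a ∉ S) (b : Bool)
    (τ : {x // x ∈ S} → Bool) :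
    extCfg (insert a S) ((insertCfgEquiv ha).symm (b, τ)) = update (extCfg S τ) a b := by
  funext u
  by_cases hua : u = a
  · subst hua
    simp [extCfg, insertCfgEquiv_symm_apply_self]
  · by_cases hu : u ∈ S
    · simp [extCfg, hua, hu, insertCfgEquiv_symm_apply_of_mem ha b τ ⟨u, hu⟩]
    · simp [extCfg, hua, hu]

theorem cylWeight_insertCfgEquiv_symm (q : ℝ) {a : ι} {S : Finset ι} (ha : a ∉ S) (b : Bool)
    (τ : {x // x ∈ S} → Bool) :
    cylWeight q (insert a S) ((insertCfgEquiv ha).symm (b, τ)) =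
      (if b then 1 - q else q) * cylWeight q S τ := by
  unfold cylWeight
  rw [← (subtypeInsertEquivOption ha).symm.prod_comp, Fintype.prod_option]
  congr 1
  · exact congrArg (fun c : Bool => if c then 1 - q else q)
      (insertCfgEquiv_symm_apply_self ha b τ)
  · exact Fintype.prod_congr _ _ fun x =>
      congrArg (fun c : Bool => if c then 1 - q else q) (insertCfgEquiv_symm_apply_of_mem ha b τ x)

theorem cylExp_insert (q : ℝ) {a : ι} {S : Finset ι} (ha : a ∉ S) (f : (ι → Bool) → ℝ) :
    cylExp q (insert a S) f =
      (1 - q) * cylExp q S (fun ω => f (update ω a true)) +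
        q * cylExp q S (fun ω => f (update ω a false)) := by
  rw [cylExp, ← (insertCfgEquiv ha).symm.sum_comp, Fintype.sum_prod_type, Fintype.sum_bool,
    cylExp, cylExp, mul_sum, mul_sum]
  simp only [cylWeight_insertCfgEquiv_symm, extCfg_insertCfgEquiv_symm, if_true,
    Bool.false_eq_true, if_false, mul_assoc]

theorem cylExp_empty (q : ℝ) (f : (ι → Bool) → ℝ) : cylExp q ∅ f = f fun _ => true := by
  simp only [cylExp, cylWeight, univ_eq_empty, prod_empty, one_mul, Fintype.sum_unique]
  congr 1

theorem cylExp_congr (q : ℝ) (S : Finset ι) {f g : (ι → Bool) → ℝ} (h : ∀ ω, f ω = g ω) :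
    cylExp q S f = cylExp q S g := by
  rw [funext h]

theorem cylExp_add (q : ℝ) (S : Finset ι) (f g : (ι → Bool) → ℝ) :
    cylExp q S (fun ω => f ω + g ω) = cylExp q S f + cylExp q S g := by
  simp only [cylExp, mul_add, sum_add_distrib]

theorem cylExp_const_mul (q : ℝ) (S : Finset ι) (c : ℝ) (f : (ι → Bool) → ℝ) :
    cylExp q S (fun ω => c * f ω) = c * cylExp q S f := by
  simp only [cylExp, mul_sum]
  exact sum_congr rfl fun _ _ => by ring

theorem cylExp_mono {q : ℝ} (hq₀ : 0 ≤ q) (hq₁ : q ≤ 1) (S : Finset ι)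
    {f g : (ι → Bool) → ℝ} (h : ∀ ω, f ω ≤ g ω) : cylExp q S f ≤ cylExp q S g :=
  sum_le_sum fun τ _ => mul_le_mul_of_nonneg_left (h _) (cylWeight_nonneg hq₀ hq₁ S τ)

theorem cylExp_nonneg {q : ℝ} (hq₀ : 0 ≤ q) (hq₁ : q ≤ 1) (S : Finset ι)
    {f : (ι → Bool) → ℝ} (h : ∀ ω, 0 ≤ f ω) : 0 ≤ cylExp q S f :=
  sum_nonneg fun τ _ => mul_nonneg (cylWeight_nonneg hq₀ hq₁ S τ) (h _)

def IgnoresCoord (a : ι) (f : (ι → Bool) → ℝ) : Prop :=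
  ∀ ω b, f (update ω a b) = f ω

theorem DependsOnCoords.ignoresCoord {f : (ι → Bool) → ℝ} {S : Finset ι}
    (hf : DependsOnCoords f S) {a : ι} (ha : a ∉ S) : IgnoresCoord a f :=
  fun ω b => hf _ _ fun _ hx => update_of_ne (ne_of_mem_of_not_mem hx ha) b ω

theorem cylExp_insert_of_ignoresCoord (q : ℝ) {a : ι} {S : Finset ι} (ha : a ∉ S)
    {f : (ι → Bool) → ℝ} (hf : IgnoresCoord a f) : cylExp q (insert a S) f = cylExp q S f := by
  rw [cylExp_insert q ha, cylExp_congr q S (hf · true), cylExp_congr q S (hf · false)]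
  ring

theorem cylExp_of_subset (q : ℝ) {S T : Finset ι} (hST : S ⊆ T) {f : (ι → Bool) → ℝ}
    (hf : DependsOnCoords f S) : cylExp q T f = cylExp q S f := by
  obtain ⟨R, hSR, rfl⟩ : ∃ R, Disjoint S R ∧ T = S ∪ R :=
    ⟨T \ S, disjoint_sdiff, (union_sdiff_of_subset hST).symm⟩
  clear hST
  induction R using Finset.induction_on with
  | empty => rw [union_empty]
  | insert a R haR ih =>
    have haS : a ∉ S := disjoint_right.1 hSR (mem_insert_self a R)
    rw [union_insert, cylExp_insert_of_ignoresCoord q (by simp [haS, haR]) (hf.ignoresCoord haS),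
      ih (hSR.mono_right (subset_insert a R))]

theorem cylExp_eq_of_dependsOnCoords (q : ℝ) {R S T : Finset ι} (hRS : R ⊆ S) (hRT : R ⊆ T)
    {f : (ι → Bool) → ℝ} (hf : DependsOnCoords f R) : cylExp q S f = cylExp q T f := by
  rw [cylExp_of_subset q hRS hf, cylExp_of_subset q hRT hf]

theorem cylExp_const (q : ℝ) (S : Finset ι) (c : ℝ) : cylExp q S (fun _ => c) = c := by
  rw [cylExp_of_subset q (empty_subset S) fun _ _ _ => rfl, cylExp_empty]

end Cylinder

section Variance

variable {ι : Type*} [DecidableEq ι]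

theorem cylVar_eq_cylExp_sub_sq (q : ℝ) (S : Finset ι) (f : (ι → Bool) → ℝ) :
    cylVar q S f = cylExp q S (fun ω => (f ω - cylExp q S f) ^ 2) := by
  set m := cylExp q S f
  rw [cylExp_congr q S fun ω => show (f ω - m) ^ 2 = f ω ^ 2 + ((-2 * m) * f ω + m ^ 2) by ring,
    cylExp_add, cylExp_add, cylExp_const_mul, cylExp_const, cylVar]
  ring

theorem cylVar_nonneg {q : ℝ} (hq₀ : 0 ≤ q) (hq₁ : q ≤ 1) (S : Finset ι) (f : (ι → Bool) → ℝ) :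
    0 ≤ cylVar q S f := by
  rw [cylVar_eq_cylExp_sub_sq]
  exact cylExp_nonneg hq₀ hq₁ S fun _ => sq_nonneg _

theorem cylVar_pos {q : ℝ} (hq : q ∈ Set.Ioo (0 : ℝ) 1) {S : Finset ι} {f : (ι → Bool) → ℝ}
    (hf : DependsOnCoords f S) (hnc : ∃ ω ω', f ω ≠ f ω') : 0 < cylVar q S f := by
  refine (cylVar_nonneg hq.1.le hq.2.le S f).lt_of_ne fun hzero => ?_
  obtain ⟨ω, ω', hne⟩ := hnc
  rw [cylVar_eq_cylExp_sub_sq, cylExp, eq_comm, sum_eq_zero_iff_of_nonneg fun τ _ =>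
    mul_nonneg (cylWeight_nonneg hq.1.le hq.2.le S τ) (sq_nonneg _)] at hzero
  have hmean : ∀ ω, f ω = cylExp q S f := fun ω => by
    have hω : f ω = f (extCfg S fun x => ω x) := hf _ _ fun x hx => by simp [extCfg, hx]
    have := hzero (fun x => ω x) (mem_univ _)
    rw [mul_eq_zero, or_iff_right (cylWeight_pos hq S _).ne', sq_eq_zero_iff, sub_eq_zero] at this
    rw [hω, this]
  exact hne ((hmean ω).trans (hmean ω').symm)

theorem cylVar_of_subset (q : ℝ) {S T : Finset ι} (hST : S ⊆ T) {f : (ι → Bool) → ℝ}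
    (hf : DependsOnCoords f S) : cylVar q T f = cylVar q S f := by
  have hf2 : DependsOnCoords (fun ω => f ω ^ 2) S := fun ω ω' h => congrArg (· ^ 2) (hf ω ω' h)
  rw [cylVar, cylVar, cylExp_of_subset q hST hf, cylExp_of_subset q hST hf2]

end Variance

section SiteDecomposition

variable {ι : Type*} [DecidableEq ι]

def avgAt (q : ℝ) (a : ι) (f : (ι → Bool) → ℝ) (ω : ι → Bool) : ℝ :=
  (1 - q) * f (update ω a true) + q * f (update ω a false)

def diffAt (a : ι) (f : (ι → Bool) → ℝ) (ω : ι → Bool) : ℝ :=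
  f (update ω a true) - f (update ω a false)

theorem varAt_eq_diffAt (q : ℝ) (f : (ι → Bool) → ℝ) (x : ι) (ω : ι → Bool) :
    varAt q f x ω = (1 - q) * q * diffAt x f ω ^ 2 := rfl

theorem ignoresCoord_avgAt (q : ℝ) (a : ι) (f : (ι → Bool) → ℝ) :
    IgnoresCoord a (avgAt q a f) := fun ω b => by
  simp only [avgAt, update_idem]

theorem diffAt_avgAt_comm (q : ℝ) {a x : ι} (hxa : x ≠ a) (f : (ι → Bool) → ℝ) :
    diffAt x (avgAt q a f) = avgAt q a (diffAt x f) := by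
  funext ω
  simp only [diffAt, avgAt, update_comm hxa]
  ring

theorem diffAt_comm {a x : ι} (hxa : x ≠ a) (f : (ι → Bool) → ℝ) :
    diffAt x (diffAt a f) = diffAt a (diffAt x f) := by
  funext ω
  simp only [diffAt, update_comm hxa]
  ring

theorem DependsOnCoords.update {f : (ι → Bool) → ℝ} {S : Finset ι} (hf : DependsOnCoords f S)
    (a : ι) (b : Bool) : DependsOnCoords (fun ω => f (update ω a b)) (S.erase a) :=
  fun ω ω' h => hf _ _ fun x hx => by
    by_cases hxa : x = a
    · simp [hxa]
    · simp only [update_of_ne hxa, h x (mem_erase.2 ⟨hxa, hx⟩)]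

theorem DependsOnCoords.avgAt {f : (ι → Bool) → ℝ} {S : Finset ι} (hf : DependsOnCoords f S)
    (q : ℝ) (a : ι) : DependsOnCoords (avgAt q a f) (S.erase a) := fun ω ω' h => by
  simp only [_root_.avgAt, hf.update a true ω ω' h, hf.update a false ω ω' h]

theorem DependsOnCoords.diffAt {f : (ι → Bool) → ℝ} {S : Finset ι} (hf : DependsOnCoords f S)
    (a : ι) : DependsOnCoords (diffAt a f) (S.erase a) := fun ω ω' h => by
  simp only [_root_.diffAt, hf.update a true ω ω' h, hf.update a false ω ω' h]

theorem cylExp_avgAt (q : ℝ) {a : ι} {B : Finset ι} (ha : a ∈ B) (f : (ι → Bool) → ℝ) :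
    cylExp q B (avgAt q a f) = cylExp q B f := by
  have hlin : cylExp q (B.erase a) (avgAt q a f) =
      (1 - q) * cylExp q (B.erase a) (fun ω => f (update ω a true)) +
        q * cylExp q (B.erase a) (fun ω => f (update ω a false)) := by
    rw [← cylExp_const_mul, ← cylExp_const_mul, ← cylExp_add]
    rfl
  rw [← insert_erase ha, cylExp_insert q (notMem_erase a B), cylExp_insert q (notMem_erase a B),
    cylExp_congr _ _ fun ω => ignoresCoord_avgAt q a f ω true,
    cylExp_congr _ _ fun ω => ignoresCoord_avgAt q a f ω false, hlin]
  ring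

/-- Integrate out `a` first, then use
`(1 - q) s² + q t² = ((1 - q) s + q t)² + (1 - q) q (s - t)²`. -/
theorem cylExp_mul_sq_eq (q : ℝ) {a : ι} {B : Finset ι} (ha : a ∈ B)
    {W : (ι → Bool) → ℝ} (hW : IgnoresCoord a W) (f : (ι → Bool) → ℝ) :
    cylExp q B (fun ω => W ω * f ω ^ 2) =
      cylExp q B (fun ω => W ω * avgAt q a f ω ^ 2) +
        (1 - q) * q * cylExp q B (fun ω => W ω * diffAt a f ω ^ 2) := by
  rw [← cylExp_avgAt q ha, ← cylExp_const_mul, ← cylExp_add]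
  refine cylExp_congr q B fun ω => ?_
  simp only [avgAt, diffAt, hW ω true, hW ω false]
  ring

theorem cylExp_sq_eq (q : ℝ) {a : ι} {B : Finset ι} (ha : a ∈ B) (f : (ι → Bool) → ℝ) :
    cylExp q B (fun ω => f ω ^ 2) =
      cylExp q B (fun ω => avgAt q a f ω ^ 2) +
        (1 - q) * q * cylExp q B (fun ω => diffAt a f ω ^ 2) := by
  simpa only [one_mul] using cylExp_mul_sq_eq q ha (W := fun _ => 1) (fun _ _ => rfl) f

theorem cylVar_eq_cylVar_avgAt_add (q : ℝ) {a : ι} {B : Finset ι} (ha : a ∈ B)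
    (f : (ι → Bool) → ℝ) :
    cylVar q B f =
      cylVar q B (avgAt q a f) + (1 - q) * q * cylExp q B (fun ω => diffAt a f ω ^ 2) := by
  rw [cylVar, cylVar, cylExp_sq_eq q ha, cylExp_avgAt q ha]
  ring

end SiteDecomposition

section Forest

variable {ι : Type*} [DecidableEq ι]

/-- The ambient set `B` of the expectations stays fixed while `S` shrinks in the induction on
forests. -/
def treeDirichlet (q : ℝ) (par : ι → ι) (B S : Finset ι) (f : (ι → Bool) → ℝ) : ℝ :=
  ∑ x ∈ S, cylExp q B (fun ω => ind (ω (par x) = false) * varAt q f x ω)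

def TreePoincare (γ q : ℝ) (par : ι → ι) (B S : Finset ι) : Prop :=
  ∀ f, DependsOnCoords f S → γ * cylVar q B f ≤ treeDirichlet q par B S f

/-- `TreePoincare γ q par B (insert ℓ S)` for the functions `φ_ℓ · h`, with `φ_ℓ` the centred
function of `ω ℓ` of variance `(1 - q) q`, divided by that variance. -/
def LeafPoincare (γ q : ℝ) (par : ι → ι) (B S : Finset ι) (ℓ : ι) : Prop :=
  ∀ h, DependsOnCoords h S →
    γ * cylExp q B (fun ω => h ω ^ 2) ≤
      cylExp q B (fun ω => ind (ω (par ℓ) = false) * h ω ^ 2) + treeDirichlet q par B S h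

theorem treeDirichlet_zero (q : ℝ) (par : ι → ι) (B S : Finset ι) :
    treeDirichlet q par B S (fun _ => 0) = 0 := by
  simp [treeDirichlet, varAt, cylExp_const]

theorem treeDirichlet_nonneg {q : ℝ} (hq₀ : 0 ≤ q) (hq₁ : q ≤ 1) (par : ι → ι) (B S : Finset ι)
    (f : (ι → Bool) → ℝ) : 0 ≤ treeDirichlet q par B S f :=
  sum_nonneg fun x _ => cylExp_nonneg hq₀ hq₁ B fun ω =>
    mul_nonneg (ind_nonneg _) (varAt_nonneg hq₀ hq₁ f x ω)

theorem ignoresCoord_ind_mul {a t : ι} (hta : t ≠ a) (c : ℝ) :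
    IgnoresCoord a (fun ω => ind (ω t = false) * c) := fun ω b => by
  simp only [update_of_ne hta]

theorem treeDirichlet_eq_of_leaf (q : ℝ) (par : ι → ι) {B S : Finset ι} {ℓ : ι} (hℓB : ℓ ∈ B)
    (hℓS : ℓ ∈ S) (hleaf : ∀ x ∈ S, par x ≠ ℓ) (f : (ι → Bool) → ℝ) :
    treeDirichlet q par B S f =
      treeDirichlet q par B (S.erase ℓ) (avgAt q ℓ f) +
        (1 - q) * q * (treeDirichlet q par B (S.erase ℓ) (diffAt ℓ f) +
          cylExp q B (fun ω => ind (ω (par ℓ) = false) * diffAt ℓ f ω ^ 2)) := by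
  have hterm : ∀ x ∈ S.erase ℓ,
      cylExp q B (fun ω => ind (ω (par x) = false) * varAt q f x ω) =
        cylExp q B (fun ω => ind (ω (par x) = false) * varAt q (avgAt q ℓ f) x ω) +
          (1 - q) * q *
            cylExp q B (fun ω => ind (ω (par x) = false) * varAt q (diffAt ℓ f) x ω) := by
    intro x hx
    have hxℓ := ne_of_mem_erase hx
    have h := cylExp_mul_sq_eq q hℓB
      (ignoresCoord_ind_mul (hleaf x (mem_of_mem_erase hx)) ((1 - q) * q)) (diffAt x f)
    simp only [varAt_eq_diffAt, ← diffAt_avgAt_comm q hxℓ, ← diffAt_comm hxℓ, mul_assoc] at h ⊢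
    exact h
  have hℓ : cylExp q B (fun ω => ind (ω (par ℓ) = false) * varAt q f ℓ ω) =
      (1 - q) * q * cylExp q B (fun ω => ind (ω (par ℓ) = false) * diffAt ℓ f ω ^ 2) := by
    rw [← cylExp_const_mul]
    exact cylExp_congr q B fun ω => by rw [varAt_eq_diffAt]; ring
  rw [treeDirichlet, ← add_sum_erase S _ hℓS, sum_congr rfl hterm, sum_add_distrib, ← mul_sum, hℓ,
    treeDirichlet, treeDirichlet]
  ring

variable {γ q : ℝ} {par : ι → ι} {B S : Finset ι} {ℓ : ι}

theorem TreePoincare.of_leaf (hq₀ : 0 ≤ q) (hq₁ : q ≤ 1) (hℓB : ℓ ∈ B) (hℓS : ℓ ∈ S)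
    (hleaf : ∀ x ∈ S, par x ≠ ℓ) (hS : TreePoincare γ q par B (S.erase ℓ))
    (hℓ : LeafPoincare γ q par B (S.erase ℓ) ℓ) : TreePoincare γ q par B S := by
  intro f hf
  have havg := hS _ (hf.avgAt q ℓ)
  have hdiff := hℓ _ (hf.diffAt ℓ)
  rw [cylVar_eq_cylVar_avgAt_add q hℓB, treeDirichlet_eq_of_leaf q par hℓB hℓS hleaf]
  have hpq : 0 ≤ (1 - q) * q := mul_nonneg (by linarith) hq₀
  nlinarith [mul_le_mul_of_nonneg_left hdiff hpq]

theorem LeafPoincare.of_treePoincare (hq : q ∈ Set.Ioo (0 : ℝ) 1) (hℓB : ℓ ∈ B) (hℓS : ℓ ∈ S)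
    (hleaf : ∀ x ∈ S, par x ≠ ℓ) (hS : TreePoincare γ q par B S) :
    LeafPoincare γ q par B (S.erase ℓ) ℓ := by
  intro h hh
  have hhℓ := hh.ignoresCoord (notMem_erase ℓ S)
  let f : (ι → Bool) → ℝ := fun ω => (if ω ℓ then q else q - 1) * h ω
  have hf : DependsOnCoords f S := fun ω ω' hω => by
    simp only [f, hω ℓ hℓS, hh ω ω' fun x hx => hω x (mem_of_mem_erase hx)]
  have havg : avgAt q ℓ f = fun _ => 0 := funext fun ω => by
    simp only [avgAt, f, update_self, hhℓ ω, if_true, Bool.false_eq_true, if_false]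
    ring
  have hdiff : diffAt ℓ f = h := funext fun ω => by
    simp only [diffAt, f, update_self, hhℓ ω, if_true, Bool.false_eq_true, if_false]
    ring
  have hpq : 0 < (1 - q) * q := mul_pos (by linarith [hq.2]) hq.1
  have := hS f hf
  rw [cylVar_eq_cylVar_avgAt_add q hℓB, treeDirichlet_eq_of_leaf q par hℓB hℓS hleaf, havg, hdiff,
    treeDirichlet_zero, cylVar] at this
  simp only [cylExp_const] at this
  refine le_of_mul_le_mul_left ?_ hpq
  linarith

theorem LeafPoincare.of_leaf {ℓ' : ι} (hq₀ : 0 ≤ q) (hq₁ : q ≤ 1) (hℓ'B : ℓ' ∈ B) (hℓ'S : ℓ' ∈ S)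
    (hleaf : ∀ x ∈ S, par x ≠ ℓ') (hℓℓ' : par ℓ ≠ ℓ') (h : LeafPoincare γ q par B (S.erase ℓ') ℓ) :
    LeafPoincare γ q par B S ℓ := by
  intro g hg
  have havg := h _ (hg.avgAt q ℓ')
  have hdiff := h _ (hg.diffAt ℓ')
  have hℓ' : 0 ≤ cylExp q B (fun ω => ind (ω (par ℓ') = false) * diffAt ℓ' g ω ^ 2) :=
    cylExp_nonneg hq₀ hq₁ B fun _ => mul_nonneg (ind_nonneg _) (sq_nonneg _)
  have hc := cylExp_mul_sq_eq q hℓ'B (ignoresCoord_ind_mul hℓℓ' 1) g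
  simp only [mul_one] at hc
  rw [cylExp_sq_eq q hℓ'B, hc, treeDirichlet_eq_of_leaf q par hℓ'B hℓ'S hleaf]
  have hpq : 0 ≤ (1 - q) * q := mul_nonneg (by linarith) hq₀
  nlinarith [mul_le_mul_of_nonneg_left hdiff hpq, mul_nonneg hpq hℓ']

end Forest

section Chains

variable {ι : Type*} [DecidableEq ι] {par : ι → ι} {π : ι → ℤ} {S : Finset ι}

theorem exists_leaf_iterate_eq (hπ : ∀ x ∈ S, π (par x) = π x + 1) {u : ι}
    (hu : u ∈ S ∪ S.image par) :
    ∃ ℓ ∈ S, (∀ x ∈ S, par x ≠ ℓ) ∧ ∃ k : ℕ, par^[k] ℓ = u ∧ π u = π ℓ + k := by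
  obtain ⟨y₀, -, hy₀⟩ := S.exists_min_image π (nonempty_of_ne_empty fun h => by simp_all)
  suffices key : ∀ n : ℕ, ∀ u ∈ S ∪ S.image par, π u ≤ π y₀ + n →
      ∃ ℓ ∈ S, (∀ x ∈ S, par x ≠ ℓ) ∧ ∃ k : ℕ, par^[k] ℓ = u ∧ π u = π ℓ + k from
    key (π u - π y₀).toNat u hu (by omega)
  intro n
  induction n using Nat.strong_induction_on with
  | _ n ih =>
    intro u hu hπu
    by_cases hleaf : u ∈ S ∧ ∀ x ∈ S, par x ≠ u
    · exact ⟨u, hleaf.1, hleaf.2, 0, rfl, by simp⟩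
    obtain ⟨y, hy, rfl⟩ : ∃ y ∈ S, par y = u := by
      rcases mem_union.1 hu with hu | hu
      · by_contra! h
        exact hleaf ⟨hu, h⟩
      · exact mem_image.1 hu
    have hπy := hπ y hy
    have hmin := hy₀ y hy
    obtain ⟨ℓ, hℓ, hℓleaf, k, rfl, hk⟩ := ih (n - 1) (by omega) y (mem_union_left _ hy) (by omega)
    exact ⟨ℓ, hℓ, hℓleaf, k + 1, iterate_succ_apply' par k ℓ, by rw [hπy, hk]; push_cast; ring⟩

theorem injOn_of_leaf_unique (hπ : ∀ x ∈ S, π (par x) = π x + 1)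
    (hunique : ∀ ℓ ∈ S, ∀ ℓ' ∈ S, (∀ x ∈ S, par x ≠ ℓ) → (∀ x ∈ S, par x ≠ ℓ') → ℓ = ℓ') :
    Set.InjOn π ↑(S ∪ S.image par) := by
  intro u hu u' hu' huu'
  obtain ⟨ℓ, hℓ, hℓleaf, k, rfl, hk⟩ := exists_leaf_iterate_eq hπ hu
  obtain ⟨ℓ', hℓ', hℓ'leaf, k', rfl, hk'⟩ := exists_leaf_iterate_eq hπ hu'
  obtain rfl := hunique ℓ hℓ ℓ' hℓ' hℓleaf hℓ'leaf
  obtain rfl : k = k' := by omega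
  rfl

end Chains

/-- Two leaves `ℓ ≠ ℓ'` of `S` reduce the Poincaré inequality on `S` to those on `S.erase ℓ` and
`S.erase ℓ'`; a forest without two leaves is a chain, on which `π` is injective. -/
theorem TreePoincare.of_chains {ι : Type*} [DecidableEq ι] {γ q : ℝ} (hq : q ∈ Set.Ioo (0 : ℝ) 1)
    {par : ι → ι} {π : ι → ℤ} {B S : Finset ι} (hSB : S ⊆ B)
    (hπ : ∀ x ∈ S, π (par x) = π x + 1)
    (hchain : ∀ T ⊆ S, Set.InjOn π ↑(T ∪ T.image par) → TreePoincare γ q par B T) :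
    TreePoincare γ q par B S := by
  induction S using Finset.strongInduction with
  | H S ih =>
    by_cases hunique : ∀ ℓ ∈ S, ∀ ℓ' ∈ S, (∀ x ∈ S, par x ≠ ℓ) → (∀ x ∈ S, par x ≠ ℓ') → ℓ = ℓ'
    · exact hchain S Subset.rfl (injOn_of_leaf_unique hπ hunique)
    push Not at hunique
    obtain ⟨ℓ, hℓ, ℓ', hℓ', hleaf, hleaf', hne⟩ := hunique
    have ih_erase : ∀ a ∈ S, TreePoincare γ q par B (S.erase a) := fun a ha =>
      ih _ (erase_ssubset ha) ((erase_subset a S).trans hSB)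
        (fun x hx => hπ x (mem_of_mem_erase hx))
        (fun T hT => hchain T (hT.trans (erase_subset a S)))
    refine (ih_erase ℓ hℓ).of_leaf hq.1.le hq.2.le (hSB hℓ) hℓ hleaf ?_
    refine LeafPoincare.of_leaf hq.1.le hq.2.le (hSB hℓ') (mem_erase.2 ⟨hne.symm, hℓ'⟩)
      (fun x hx => hleaf' x (mem_of_mem_erase hx)) (hleaf' ℓ hℓ) ?_
    rw [erase_right_comm]
    exact LeafPoincare.of_treePoincare hq (hSB hℓ) (mem_erase.2 ⟨hne, hℓ⟩)
      (fun x hx => hleaf x (mem_of_mem_erase hx)) (ih_erase ℓ' hℓ')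

section Relabel

variable {ι κ : Type*} [DecidableEq ι] [DecidableEq κ]

def pullCfg (π : ι → κ) (T : Finset ι) (η : κ → Bool) : ι → Bool :=
  fun u => if u ∈ T then η (π u) else true

theorem pullCfg_update {π : ι → κ} {T : Finset ι} (hinj : Set.InjOn π T) {x : ι} (hx : x ∈ T)
    (b : Bool) (η : κ → Bool) :
    pullCfg π T (update η (π x) b) = update (pullCfg π T η) x b := by
  funext u
  by_cases hux : u = x
  · subst hux
    simp [pullCfg, hx]
  · by_cases hu : u ∈ T
    · have : π u ≠ π x := fun h => hux (hinj hu hx h)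
      simp [pullCfg, hu, hux, this]
    · simp [pullCfg, hu, hux]

theorem DependsOnCoords.comp_pullCfg {f : (ι → Bool) → ℝ} {S T : Finset ι}
    (hf : DependsOnCoords f S) (hST : S ⊆ T) (π : ι → κ) :
    DependsOnCoords (fun η => f (pullCfg π T η)) (S.image π) := fun η η' h =>
  hf _ _ fun x hx => by simp [pullCfg, hST hx, h (π x) (mem_image_of_mem π hx)]

theorem cylExp_comp_pullCfg (q : ℝ) {π : ι → κ} {T : Finset ι} (hinj : Set.InjOn π T)
    (f : (ι → Bool) → ℝ) :
    cylExp q (T.image π) (fun η => f (pullCfg π T η)) = cylExp q T f := by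
  let e : {x // x ∈ T} ≃ {y // y ∈ T.image π} := Equiv.ofBijective
    (fun x => ⟨π x, mem_image_of_mem π x.2⟩)
    ⟨fun x y h => Subtype.ext (hinj x.2 y.2 (congrArg Subtype.val h)), fun y => by
      obtain ⟨x, hx, hxy⟩ := mem_image.1 y.2
      exact ⟨⟨x, hx⟩, Subtype.ext hxy⟩⟩
  rw [cylExp, ← (e.arrowCongr (Equiv.refl Bool)).sum_comp]
  refine Fintype.sum_congr _ _ fun τ => ?_
  have hsymm : ∀ x : {x // x ∈ T}, e.symm ⟨π x, mem_image_of_mem π x.2⟩ = x := fun x =>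
    e.symm_apply_eq.2 rfl
  congr 1
  · rw [cylWeight, cylWeight, ← e.prod_comp]
    simp
  · congr 1
    funext u
    by_cases hu : u ∈ T
    · simp only [pullCfg, extCfg, if_pos hu, dif_pos hu, dif_pos (mem_image_of_mem π hu),
        Equiv.arrowCongr_apply, Equiv.coe_refl, id, comp_apply]
      rw [hsymm ⟨u, hu⟩]
    · simp [pullCfg, extCfg, hu]

variable {γ q : ℝ}

theorem DependsOnCoords.ind_mul_varAt {f : (ι → Bool) → ℝ} {S : Finset ι}
    (hf : DependsOnCoords f S) (q : ℝ) (t x : ι) :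
    DependsOnCoords (fun ω => ind (ω t = false) * varAt q f x ω) (insert t S) := fun ω ω' h => by
  simp only [varAt_eq_diffAt, h t (mem_insert_self t S),
    hf.diffAt x ω ω' fun y hy => h y (mem_insert_of_mem (mem_of_mem_erase hy))]

theorem TreePoincare.of_subset {par : ι → ι} {B T S : Finset ι} (hTB : T ⊆ B) (hST : S ⊆ T)
    (hpar : ∀ x ∈ S, par x ∈ T) (h : TreePoincare γ q par T S) : TreePoincare γ q par B S := by
  intro f hf
  rw [cylVar_of_subset q (hST.trans hTB) hf, ← cylVar_of_subset q hST hf]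
  refine (h f hf).trans_eq (sum_congr rfl fun x hx => ?_)
  have hR : insert (par x) S ⊆ T := insert_subset (hpar x hx) hST
  exact cylExp_eq_of_dependsOnCoords q hR (hR.trans hTB) (hf.ind_mul_varAt q (par x) x)

theorem TreePoincare.of_injOn {par : ι → ι} {par' : κ → κ} {π : ι → κ} {T S : Finset ι}
    (hinj : Set.InjOn π T) (hST : S ⊆ T) (hpar : ∀ x ∈ S, par x ∈ T ∧ π (par x) = par' (π x))
    (h : TreePoincare γ q par' (T.image π) (S.image π)) : TreePoincare γ q par T S := by
  intro f hf
  have hvar : cylVar q (T.image π) (fun η => f (pullCfg π T η)) = cylVar q T f := by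
    rw [cylVar, cylVar, cylExp_comp_pullCfg q hinj, ← cylExp_comp_pullCfg q hinj (fun ω => f ω ^ 2)]
  rw [← hvar]
  refine (h _ (hf.comp_pullCfg hST π)).trans_eq ?_
  rw [treeDirichlet, sum_image fun x hx y hy => hinj (hST hx) (hST hy)]
  refine sum_congr rfl fun x hx => ?_
  rw [← cylExp_comp_pullCfg q hinj]
  refine cylExp_congr q _ fun η => ?_
  simp only [varAt, pullCfg_update hinj (hST hx), pullCfg, if_pos (hpar x hx).1, (hpar x hx).2]

end Relabel

section East

theorem dirichlet_eq_sum {ι : Type*} [DecidableEq ι] (q : ℝ) (c : ι → (ι → Bool) → Prop)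
    (supp : ι → Finset ι) {S : Finset ι} {f : (ι → Bool) → ℝ} (hf : DependsOnCoords f S) :
    dirichlet q c supp S f =
      ∑ x ∈ S, cylExp q (insert x (S ∪ supp x)) (fun ω => ind (c x ω) * varAt q f x ω) := by
  refine tsum_eq_sum fun x hx => ?_
  have hfx := hf.ignoresCoord hx
  rw [cylExp_congr _ _ fun ω => show ind (c x ω) * varAt q f x ω = 0 by
    rw [varAt, hfx, hfx, sub_self]; ring, cylExp_const]

theorem dirichlet_nonneg {ι : Type*} [DecidableEq ι] {q : ℝ} (hq₀ : 0 ≤ q) (hq₁ : q ≤ 1)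
    (c : ι → (ι → Bool) → Prop) (supp : ι → Finset ι) (S : Finset ι) (f : (ι → Bool) → ℝ) :
    0 ≤ dirichlet q c supp S f :=
  tsum_nonneg fun x => cylExp_nonneg hq₀ hq₁ _ fun ω =>
    mul_nonneg (ind_nonneg _) (varAt_nonneg hq₀ hq₁ f x ω)

theorem treePoincare_eastGap {q : ℝ} (hq : q ∈ Set.Ioo (0 : ℝ) 1) {B S : Finset ℤ} (hSB : S ⊆ B)
    (hB : ∀ x ∈ S, x + 1 ∈ B) : TreePoincare (eastGap q) q (· + 1) B S := by
  intro f hf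
  by_cases hnc : ∃ ω ω', f ω ≠ f ω'
  · have hvar := cylVar_pos hq hf hnc
    have hle : eastGap q ≤ _ := csInf_le ⟨0, ?_⟩ ⟨f, S, hf, hnc, rfl⟩
    · rw [le_div_iff₀ hvar, dirichlet_eq_sum _ _ _ hf] at hle
      rw [cylVar_of_subset q hSB hf]
      refine hle.trans_eq (sum_congr rfl fun x hx => ?_)
      exact cylExp_eq_of_dependsOnCoords q
        (insert_subset (mem_insert_of_mem (mem_union_right _ (mem_singleton_self _)))
          (subset_union_left.trans (subset_insert _ _)))
        (insert_subset (hB x hx) hSB) (hf.ind_mul_varAt q (x + 1) x)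
    · rintro _ ⟨g, T, -, -, rfl⟩
      exact div_nonneg (dirichlet_nonneg hq.1.le hq.2.le _ _ T g)
        (cylVar_nonneg hq.1.le hq.2.le T g)
  · push Not at hnc
    have hconst : cylVar q B f = 0 := by
      rw [cylVar, cylExp_congr q B fun ω => hnc ω fun _ => true,
        cylExp_congr q B fun ω => congrArg (· ^ 2) (hnc ω fun _ => true), cylExp_const,
        cylExp_const, sub_self]
    rw [hconst, mul_zero]
    exact treeDirichlet_nonneg hq.1.le hq.2.le _ B S f

end East

theorem SimpleGraph.Connected.exists_adj_dist_add_one_eq {V : Type*} {G : SimpleGraph V}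
    (hconn : G.Connected) {x w : V} (hxw : x ≠ w) :
    ∃ y, G.Adj x y ∧ G.dist y w + 1 = G.dist x w := by
  obtain ⟨p, hp⟩ := hconn.exists_walk_length_eq_dist x w
  cases p with
  | nil => exact absurd rfl hxw
  | @cons _ y _ hadj p' =>
    refine ⟨_, hadj, le_antisymm ?_ ?_⟩
    · have := SimpleGraph.dist_le p'
      rw [← hp, SimpleGraph.Walk.length_cons]
      omega
    · have := hconn.dist_triangle (u := x) (v := y) (w := w)
      rw [SimpleGraph.dist_eq_one_iff_adj.2 hadj] at this
      omega

theorem treePoincare_eastGap_of_height {ι : Type*} [DecidableEq ι] {q : ℝ}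
    (hq : q ∈ Set.Ioo (0 : ℝ) 1) (par : ι → ι) (π : ι → ℤ) {S : Finset ι}
    (hπ : ∀ x ∈ S, π (par x) = π x + 1) :
    TreePoincare (eastGap q) q par (S ∪ S.image par) S := by
  refine TreePoincare.of_chains hq subset_union_left hπ fun T hTS hinj => ?_
  have hpar : ∀ x ∈ T, par x ∈ T ∪ T.image par ∧ π (par x) = π x + 1 := fun x hx =>
    ⟨mem_union_right _ (mem_image_of_mem par hx), hπ x (hTS hx)⟩
  refine (TreePoincare.of_injOn (par' := (· + 1)) hinj subset_union_left hpar ?_).of_subset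
    (union_subset_union hTS (image_subset_image hTS)) subset_union_left fun x hx => (hpar x hx).1
  refine treePoincare_eastGap hq (image_subset_image subset_union_left) fun y hy => ?_
  obtain ⟨x, hx, rfl⟩ := mem_image.1 hy
  rw [← (hpar x hx).2]
  exact mem_image_of_mem π (hpar x hx).1

end

open scoped Classical in
theorem fa1f_infinite_gap_ge_east_gap_general {V : Type*} [DecidableEq V] [Infinite V]
    (G : SimpleGraph V) [G.LocallyFinite] (hconn : G.Connected)
    (q : ℝ) (hq : q ∈ Set.Ioo (0 : ℝ) 1) :
    eastGap q ≤
      kcmGap q (fun x ω => ∃ y, G.Adj x y ∧ ω y = false)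
        (fun x => G.neighborFinset x) := by
  refine le_csInf ?_ ?_
  · obtain ⟨x₀⟩ := ‹Infinite V›.nonempty
    refine ⟨_, fun ω => ind (ω x₀ = true), {x₀}, fun ω ω' h => ?_,
      ⟨fun _ => true, fun _ => false, ?_⟩, rfl⟩
    · simp only [h x₀ (mem_singleton_self x₀)]
    · simp [ind]
  rintro _ ⟨f, S, hf, hnc, rfl⟩
  rw [le_div_iff₀ (cylVar_pos hq hf hnc)]
  obtain ⟨w, hw⟩ := Infinite.exists_notMem_finset S
  choose! par hadj hdist using fun x (hx : x ∈ S) =>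
    hconn.exists_adj_dist_add_one_eq (ne_of_mem_of_not_mem hx hw)
  have hS := treePoincare_eastGap_of_height hq par (fun x => -(G.dist x w : ℤ))
    (fun x hx => by rw [← hdist x hx]; push_cast; ring) f hf
  rw [cylVar_of_subset q subset_union_left hf] at hS
  refine hS.trans ((dirichlet_eq_sum q _ _ hf).symm ▸ sum_le_sum fun x hx => ?_)
  have hpar : par x ∈ G.neighborFinset x := (G.mem_neighborFinset x _).2 (hadj x hx)
  rw [cylExp_eq_of_dependsOnCoords q (insert_subset (mem_union_right _ (mem_image_of_mem par hx))
    subset_union_left) (insert_subset (mem_insert_of_mem (mem_union_right _ hpar))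
    (subset_union_left.trans (subset_insert _ _))) (hf.ind_mul_varAt q (par x) x)]
  exact cylExp_mono hq.1.le hq.2.le _ fun ω => mul_le_mul_of_nonneg_right
    (ind_mono fun h => ⟨par x, hadj x hx, h⟩) (varAt_nonneg hq.1.le hq.2.le f x ω)

open scoped Classical in
/-- For an infinite connected graph of bounded degree, the spectral gap
of the FA-1f model (constraint at `x`: some neighbor of `x` is empty; no unconstrained
vertex) is at least the spectral gap of the East model on `ℤ`, at the same `q ∈ (0,1)`. -/
theorem fa1f_infinite_gap_ge_east_gap {V : Type*} [DecidableEq V] [Infinite V]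
    (G : SimpleGraph V) [G.LocallyFinite] (hconn : G.Connected)
    (D : ℕ) (hdeg : ∀ x, G.degree x ≤ D)
    (q : ℝ) (hq : q ∈ Set.Ioo (0 : ℝ) 1) :
    eastGap q ≤
      kcmGap q (fun x ω => ∃ y, G.Adj x y ∧ ω y = false)
        (fun x => G.neighborFinset x) :=
  fa1f_infinite_gap_ge_east_gap_general G hconn q hq
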